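/- arXiv:2601.04384 — 3 statements merged into one kernel-verified Lean document; each statement's English description precedes it below -/
import Mathlib

section
/- Let v ∈ ℝ^n satisfy |v_i| ≥ 1 for all i, and let ξ_1, ..., ξ_n be i.i.d. Rademacher random variables (uniform on {−1, +1}). Then there is an absolute constant C such that for every closed interval I, P(∑_{i=1}^n ξ_i v_i ∈ I) ≤ C (|I| + 1)/√n. -/
open scoped Classical
open Finset


lemma ELO_lemA : ∀ n : ℕ, (3*n+1) * Nat.centralBinom n ^ 2 ≤ 16 ^ n := by
  intro n
  induction n with
  | zero => simp [Nat.centralBinom]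
  | succ n ih =>
    have h1 := Nat.succ_mul_centralBinom_succ n
    have h2 : (n+1)^2 * Nat.centralBinom (n+1) ^ 2 = 4*(2*n+1)^2 * Nat.centralBinom n ^ 2 := by
      have := congrArg (· ^ 2) h1
      simp only [mul_pow] at this
      ring_nf at this ⊢
      nlinarith [this]
    have key : (3*(n+1)+1) * Nat.centralBinom (n+1) ^ 2 * (n+1)^2 ≤ 16 ^ (n+1) * (n+1)^2 := by
      calc (3*(n+1)+1) * Nat.centralBinom (n+1) ^ 2 * (n+1)^2
          = (3*n+4) * (4*(2*n+1)^2 * Nat.centralBinom n ^ 2) := by rw [← h2]; ring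
        _ ≤ 16*(n+1)^2 * ((3*n+1) * Nat.centralBinom n ^ 2) := by nlinarith [Nat.centralBinom_pos n, sq_nonneg (Nat.centralBinom n)]
        _ ≤ 16*(n+1)^2 * 16^n := by exact Nat.mul_le_mul_left _ ih
        _ = 16 ^ (n+1) * (n+1)^2 := by ring
    exact Nat.le_of_mul_le_mul_right key (by positivity)


lemma ELO_lemA' (m : ℕ) : (Nat.centralBinom m : ℝ) * Real.sqrt (3*m+1) ≤ 4 ^ m := by
  have h := ELO_lemA m
  have h' : ((Nat.centralBinom m : ℝ) * Real.sqrt (3*m+1))^2 ≤ ((4:ℝ)^m)^2 := by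
    have hs : Real.sqrt (3*m+1) ^ 2 = 3*m+1 := Real.sq_sqrt (by positivity)
    rw [mul_pow, hs]
    calc (Nat.centralBinom m : ℝ)^2 * (3*↑m+1) = ((3*m+1) * Nat.centralBinom m ^ 2 : ℕ) := by push_cast; ring
      _ ≤ ((16:ℕ)^m : ℝ) := by exact_mod_cast Nat.cast_le.mpr h
      _ = ((4:ℝ)^m)^2 := by push_cast; rw [← pow_mul, mul_comm m 2, pow_mul]; norm_num
  exact (abs_le_of_sq_le_sq' h' (by positivity)).2

lemma ELO_lemB (n : ℕ) (hn : 1 ≤ n) : (Nat.choose n (n/2) : ℝ) * Real.sqrt n ≤ 2 * 2 ^ n := by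
  rcases Nat.even_or_odd n with ⟨m, hm⟩ | ⟨m, hm⟩
  · subst hm
    have hc : (m+m)/2 = m := by omega
    rw [hc]
    have h1 : (Nat.choose (m+m) m : ℝ) = Nat.centralBinom m := by
      rw [Nat.centralBinom_eq_two_mul_choose]; norm_num; ring_nf
    have h2 := ELO_lemA' m
    have hmono : Real.sqrt (m+m : ℕ) ≤ Real.sqrt (3*m+1) := by
      apply Real.sqrt_le_sqrt; push_cast; linarith
    have h4 : ((4:ℝ))^m = 2^(m+m) := by rw [show (4:ℝ) = 2^2 by norm_num, ← pow_mul]; ring_nf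
    calc (Nat.choose (m+m) m : ℝ) * Real.sqrt (m+m : ℕ)
        ≤ (Nat.centralBinom m : ℝ) * Real.sqrt (3*m+1) := by
          rw [h1]; exact mul_le_mul_of_nonneg_left hmono (by positivity)
      _ ≤ 4^m := h2
      _ ≤ 2 * 2^(m+m) := by rw [← h4]; nlinarith [pow_pos (by norm_num : (0:ℝ)<4) m]
  · subst hm
    have hc : (2*m+1)/2 = m := by omega
    rw [hc]
    have hle : Nat.choose (2*m+1) m ≤ Nat.centralBinom (m+1) := by
      rw [Nat.centralBinom]
      calc Nat.choose (2*m+1) m ≤ Nat.choose (2*m+1) m + Nat.choose (2*m+1) (m+1) := Nat.le_add_right _ _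
        _ = Nat.choose (2*m+2) (m+1) := (Nat.choose_succ_succ' (2*m+1) m).symm ▸ rfl
        _ = Nat.choose (2*(m+1)) (m+1) := by ring_nf
    have h2 := ELO_lemA' (m+1)
    have hmono : Real.sqrt (2*m+1 : ℕ) ≤ Real.sqrt (3*(m+1 : ℕ)+1) := by
      apply Real.sqrt_le_sqrt; push_cast; linarith
    calc (Nat.choose (2*m+1) m : ℝ) * Real.sqrt (2*m+1 : ℕ)
        ≤ (Nat.centralBinom (m+1) : ℝ) * Real.sqrt (3*(m+1 : ℕ)+1) := by
          apply mul_le_mul (by exact_mod_cast hle) hmono (Real.sqrt_nonneg _) (by positivity)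
      _ ≤ 4^(m+1) := h2
      _ = 2 * 2^(2*m+1) := by
          rw [show (4:ℝ) = 2^2 by norm_num, ← pow_mul]; ring

lemma ELO_lemC (n : ℕ) (v : Fin n → ℝ) (a b : ℝ) :
    (Finset.univ.filter (fun ξ : Fin n → Bool =>
      (∑ i, (if ξ i then (1:ℝ) else -1) * v i) ∈ Set.Icc a b)).card
    = (Finset.univ.filter (fun ξ : Fin n → Bool =>
      (∑ i, (if ξ i then (1:ℝ) else -1) * |v i|) ∈ Set.Icc a b)).card := by
  have key : ∀ ξ : Fin n → Bool,
      ∑ i, (if (if v i < 0 then !(ξ i) else ξ i) then (1:ℝ) else -1) * |v i|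
      = ∑ i, (if ξ i then (1:ℝ) else -1) * v i := by
    intro ξ
    apply Finset.sum_congr rfl
    intro i _
    by_cases h : v i < 0
    · rw [abs_of_neg h]; simp only [h, if_true]; cases ξ i <;> simp <;> ring
    · rw [abs_of_nonneg (not_lt.mp h)]; simp only [h, if_false]
  apply Finset.card_nbij' (fun ξ => fun i => if v i < 0 then !(ξ i) else ξ i)
    (fun ξ => fun i => if v i < 0 then !(ξ i) else ξ i)
  · intro ξ hξ
    simp only [Finset.mem_coe, Finset.mem_filter, Finset.mem_univ, true_and] at hξ ⊢
    rw [key]; exact hξ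
  · intro ξ hξ
    simp only [Finset.mem_coe, Finset.mem_filter, Finset.mem_univ, true_and] at hξ ⊢
    have : ∑ i, (if (if v i < 0 then !(ξ i) else ξ i) then (1:ℝ) else -1) * v i
        = ∑ i, (if ξ i then (1:ℝ) else -1) * |v i| := by
      apply Finset.sum_congr rfl
      intro i _
      by_cases h : v i < 0
      · rw [abs_of_neg h]; simp only [h, if_true]; cases ξ i <;> simp
      · rw [abs_of_nonneg (not_lt.mp h)]; simp only [h, if_false]
    rw [this]; exact hξ
  · intro ξ _; funext i; by_cases h : v i < 0 <;> simp [h]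
  · intro ξ _; funext i; by_cases h : v i < 0 <;> simp [h]

lemma hsum (n : ℕ) (v : Fin n → ℝ) (ξ : Fin n → Bool) :
    ∑ i, (if ξ i then (1:ℝ) else -1) * v i
    = 2 * (∑ i ∈ Finset.univ.filter (fun i => ξ i = true), v i) - ∑ i, v i := by
  rw [Finset.sum_filter, Finset.mul_sum, ← Finset.sum_sub_distrib]
  apply Finset.sum_congr rfl
  intro i _
  by_cases h : ξ i = true <;> simp [h] <;> ring

lemma ELO_lemD (n : ℕ) (v : Fin n → ℝ) (hv : ∀ i, 1 ≤ v i) (c : ℝ) :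
    (Finset.univ.filter (fun ξ : Fin n → Bool =>
      (∑ i, (if ξ i then (1:ℝ) else -1) * v i) ∈ Set.Ico c (c+2))).card
      ≤ Nat.choose n (n/2) := by
  classical
  set A := Finset.univ.filter (fun ξ : Fin n → Bool =>
      (∑ i, (if ξ i then (1:ℝ) else -1) * v i) ∈ Set.Ico c (c+2)) with hA
  set S : (Fin n → Bool) → Finset (Fin n) := fun ξ => Finset.univ.filter (fun i => ξ i = true) with hS
  have hinj : Set.InjOn S A := by
    intro ξ _ ξ' _ h
    funext i
    have := Finset.ext_iff.mp h i
    simp only [hS, Finset.mem_filter, Finset.mem_univ, true_and] at this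
    cases hx : ξ i <;> cases hy : ξ' i <;> simp_all
  have hcard : A.card = (A.image S).card := (Finset.card_image_of_injOn hinj).symm
  rw [hcard]
  have hanti : IsAntichain (· ⊆ ·) ((A.image S : Finset (Finset (Fin n))) : Set (Finset (Fin n))) := by
    intro s hs t ht hne hsub
    simp only [Finset.coe_image, Set.mem_image, Finset.mem_coe] at hs ht
    obtain ⟨ξ, hξ, rfl⟩ := hs
    obtain ⟨ξ', hξ', rfl⟩ := ht
    rw [hA, Finset.mem_filter] at hξ hξ'
    have h1 := hξ.2
    have h2 := hξ'.2
    rw [hsum n v] at h1 h2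
    simp only [Set.mem_Ico] at h1 h2
    have hdiff : (1:ℝ) ≤ ∑ i ∈ S ξ' \ S ξ, v i := by
      have hne' : (S ξ' \ S ξ).Nonempty := by
        rw [Finset.sdiff_nonempty]
        intro hcon
        exact hne (Finset.Subset.antisymm hsub hcon)
      calc (1:ℝ) = ((1:ℕ):ℝ) := by norm_num
        _ ≤ ((S ξ' \ S ξ).card : ℝ) := by exact_mod_cast Finset.card_pos.mpr hne'
        _ ≤ ∑ i ∈ S ξ' \ S ξ, v i := by
            calc ((S ξ' \ S ξ).card : ℝ) = ∑ _i ∈ S ξ' \ S ξ, (1:ℝ) := by simp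
              _ ≤ _ := Finset.sum_le_sum (fun i _ => hv i)
    have hsplit : ∑ i ∈ S ξ' \ S ξ, v i + ∑ i ∈ S ξ, v i = ∑ i ∈ S ξ', v i :=
      Finset.sum_sdiff hsub
    linarith [h1.1, h2.2]
  have := IsAntichain.sperner hanti
  simpa using this



/-- Erdős–Littlewood–Offord: if `|v i| ≥ 1` for all `i` and the `ξ i` are iid Rademacher,
then for any interval `I = [a,b]`, `P(∑ ξ i * v i ∈ I) ≤ C(|I|+1)/√n`. -/
theorem stmt_2 :
    ∃ C : ℝ, 0 < C ∧ ∀ (n : ℕ) (v : Fin n → ℝ), 1 ≤ n → (∀ i, 1 ≤ |v i|) →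
      ∀ a b : ℝ, a ≤ b →
        ((Finset.univ.filter (fun ξ : Fin n → Bool =>
            (∑ i, (if ξ i then (1 : ℝ) else -1) * v i) ∈ Set.Icc a b)).card : ℝ)
            / 2 ^ n
          ≤ C * ((b - a) + 1) / Real.sqrt n := by
  refine ⟨2, by norm_num, ?_⟩
  intro n v hn hv a b hab
  set w : Fin n → ℝ := fun i => |v i| with hw
  have hw1 : ∀ i, 1 ≤ w i := hv
  rw [ELO_lemC n v a b]
  set K : ℕ := ⌊(b - a)/2⌋₊ + 1 with hK
  -- covering
  have hsub : (Finset.univ.filter (fun ξ : Fin n → Bool =>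
      (∑ i, (if ξ i then (1:ℝ) else -1) * w i) ∈ Set.Icc a b))
      ⊆ (Finset.range K).biUnion (fun k => Finset.univ.filter (fun ξ : Fin n → Bool =>
      (∑ i, (if ξ i then (1:ℝ) else -1) * w i) ∈ Set.Ico (a + 2*k) (a + 2*k + 2))) := by
    intro ξ hξ
    simp only [Finset.mem_filter, Finset.mem_univ, true_and, Set.mem_Icc] at hξ
    set s := ∑ i, (if ξ i then (1:ℝ) else -1) * w i with hs
    have hs0 : 0 ≤ (s - a)/2 := by linarith [hξ.1]
    refine Finset.mem_biUnion.mpr ⟨⌊(s - a)/2⌋₊, ?_, ?_⟩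
    · rw [Finset.mem_range, hK]
      have : ⌊(s - a)/2⌋₊ ≤ ⌊(b - a)/2⌋₊ :=
        Nat.floor_le_floor (by linarith [hξ.2])
      omega
    · simp only [Finset.mem_filter, Finset.mem_univ, true_and, Set.mem_Ico]
      constructor
      · have := Nat.floor_le hs0
        linarith
      · have := Nat.lt_floor_add_one ((s - a)/2)
        push_cast at this ⊢
        linarith
  have hcount : (Finset.univ.filter (fun ξ : Fin n → Bool =>
      (∑ i, (if ξ i then (1:ℝ) else -1) * w i) ∈ Set.Icc a b)).card
      ≤ K * Nat.choose n (n/2) := by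
    calc _ ≤ _ := Finset.card_le_card hsub
      _ ≤ ∑ k ∈ Finset.range K, (Finset.univ.filter (fun ξ : Fin n → Bool =>
          (∑ i, (if ξ i then (1:ℝ) else -1) * w i) ∈ Set.Ico (a + 2*k) (a + 2*k + 2))).card :=
        Finset.card_biUnion_le
      _ ≤ ∑ k ∈ Finset.range K, Nat.choose n (n/2) := by
        apply Finset.sum_le_sum
        intro k _
        have := ELO_lemD n w hw1 (a + 2*k)
        convert this using 4
      _ = K * Nat.choose n (n/2) := by rw [Finset.sum_const, Finset.card_range, smul_eq_mul]
  -- real arithmetic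
  have hs : (0:ℝ) < Real.sqrt n := Real.sqrt_pos.mpr (by exact_mod_cast hn)
  rw [div_le_div_iff₀ (by positivity) hs]
  have hc1 : ((Finset.univ.filter (fun ξ : Fin n → Bool =>
      (∑ i, (if ξ i then (1:ℝ) else -1) * w i) ∈ Set.Icc a b)).card : ℝ)
      ≤ ((b - a)/2 + 1) * (Nat.choose n (n/2) : ℝ) := by
    calc ((Finset.univ.filter (fun ξ : Fin n → Bool =>
        (∑ i, (if ξ i then (1:ℝ) else -1) * w i) ∈ Set.Icc a b)).card : ℝ)
        ≤ (K : ℝ) * (Nat.choose n (n/2) : ℝ) := by exact_mod_cast hcount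
      _ ≤ ((b - a)/2 + 1) * (Nat.choose n (n/2) : ℝ) := by
          apply mul_le_mul_of_nonneg_right _ (by positivity)
          rw [hK]
          push_cast
          have := Nat.floor_le (show (0:ℝ) ≤ (b-a)/2 by linarith)
          linarith
  have hb := ELO_lemB n hn
  have h2 : ((b - a)/2 + 1) * (Nat.choose n (n/2) : ℝ) * Real.sqrt n
      ≤ ((b - a)/2 + 1) * (2 * 2^n) := by
    rw [mul_assoc]
    exact mul_le_mul_of_nonneg_left hb (by linarith)
  have hpow : (0:ℝ) ≤ (2:ℝ)^n := by positivity
  nlinarith [mul_le_mul_of_nonneg_right hc1 hs.le, mul_nonneg (show (0:ℝ) ≤ b - a by linarith) hpow]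
end

section
/- Let v = (1, 2, ..., n) and let w ∈ ℝ^n be a unit vector (∑ w_i² = 1) with ∑ w_i = 0. Then there is an absolute constant C such that for every x ∈ ℝ, with π a uniformly random permutation, P(∑_i w_{π(i)} · i = x) ≤ C/n. -/
open scoped Classical
open Finset Equiv

namespace Soze

/-- value of succAbove -/
lemma coe_succAbove {k : ℕ} (p : Fin (k+1)) (q : Fin k) :
    ((p.succAbove q : Fin (k+1)) : ℕ) = if (q:ℕ) < (p:ℕ) then (q:ℕ) else (q:ℕ)+1 := by
  rw [Fin.succAbove]
  split_ifs with h1 h2 h2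
  · rfl
  · exact absurd (by rwa [Fin.lt_def, Fin.coe_castSucc] at h1) h2
  · exact absurd (by rw [Fin.lt_def, Fin.coe_castSucc]; exact h2) h1
  · rfl

lemma coe_predAbove {k : ℕ} (t : Fin k) (q : Fin (k+1)) :
    ((t.predAbove q : Fin k) : ℕ) = if (t:ℕ) < (q:ℕ) then (q:ℕ) - 1 else (q:ℕ) := by
  rw [Fin.predAbove]
  split_ifs with h1 h2 h2
  · rw [Fin.coe_pred]
  · exact absurd (by rwa [Fin.lt_def, Fin.coe_castSucc] at h1) h2
  · exact absurd (by rw [Fin.lt_def, Fin.coe_castSucc]; exact h2) h1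
  · rw [Fin.coe_castPred]

lemma predAbove_inj_off {k : ℕ} (t : Fin k) (q q' : Fin (k+1))
    (hq : q ≠ t.succ) (hq' : q' ≠ t.succ) (h : t.predAbove q = t.predAbove q') : q = q' := by
  have hv := congrArg (fun x : Fin k => (x : ℕ)) h
  simp only [coe_predAbove] at hv
  have hqv : (q : ℕ) ≠ (t : ℕ) + 1 := fun hc => hq (Fin.ext (by simp [hc]))
  have hqv' : (q' : ℕ) ≠ (t : ℕ) + 1 := fun hc => hq' (Fin.ext (by simp [hc]))
  apply Fin.ext
  split_ifs at hv with h1 h2 h2 <;> omega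

/-- monotone walk level-set bound -/
lemma walk_bound (h : ℕ → ℝ) (K : ℕ) (mono : ∀ m, m < K → h (m+1) ≤ h m) (y : ℝ) :
    ((range (K+1)).filter fun m => h m = y).card ≤
      1 + ((range K).filter fun m => h m = y ∧ h (m+1) = y).card := by
  have anti : ∀ a b, a ≤ b → b ≤ K → h b ≤ h a := by
    intro a b hab hbK
    induction b with
    | zero => simp_all
    | succ b ih =>
      rcases Nat.eq_or_lt_of_le hab with heq | hab'
      · rw [heq]
      · exact le_trans (mono b (by omega)) (ih (by omega) (by omega))
  set s := (range (K+1)).filter fun m => h m = y with hs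
  rcases s.eq_empty_or_nonempty with he | hne
  · simp [he]
  · set m₀ := s.min' hne with hm0
    have hm0s : m₀ ∈ s := s.min'_mem hne
    have hm0y : h m₀ = y := (mem_filter.mp hm0s).2
    have hm0K : m₀ ≤ K := by have := (mem_filter.mp hm0s).1; rw [mem_range] at this; omega
    have hcard : s.card = 1 + (s.erase m₀).card := by
      rw [card_erase_of_mem hm0s]
      have : 0 < s.card := card_pos.mpr hne
      omega
    rw [hcard]
    apply Nat.add_le_add_left
    apply card_le_card_of_injOn (fun m => m - 1)
    · intro m hm
      have hms : m ∈ s := mem_of_mem_erase hm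
      have hmy : h m = y := (mem_filter.mp hms).2
      have hmK : m ≤ K := by have := (mem_filter.mp hms).1; rw [mem_range] at this; omega
      have hm0lt : m₀ < m := by
        rcases Nat.lt_or_ge m₀ m with h' | h'
        · exact h'
        · have : m₀ ≤ m := s.min'_le m hms
          have : m = m₀ := by omega
          exact absurd this (ne_of_mem_erase hm)
      have hm1 : m - 1 < K := by omega
      have h1y : h (m-1) = y := by
        have hle1 : h (m-1) ≤ h m₀ := anti m₀ (m-1) (by omega) (by omega)
        have hle2 : h m ≤ h (m-1) := by
          have := anti (m-1) m (by omega) hmK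
          exact this
        rw [hm0y] at hle1; rw [hmy] at hle2
        linarith
      simp only [mem_coe, mem_filter, mem_range]
      refine ⟨hm1, h1y, ?_⟩
      have : m - 1 + 1 = m := by omega
      rw [this]; exact hmy
    · intro a ha b hb hab
      have ha' : m₀ < a := by
        have has : a ∈ s := mem_of_mem_erase ha
        have := s.min'_le a has
        rcases Nat.eq_or_lt_of_le this with h' | h'
        · exact absurd h'.symm (ne_of_mem_erase ha)
        · exact h'
      have hb' : m₀ < b := by
        have hbs : b ∈ s := mem_of_mem_erase hb
        have := s.min'_le b hbs
        rcases Nat.eq_or_lt_of_le this with h' | h'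
        · exact absurd h'.symm (ne_of_mem_erase hb)
        · exact h'
      have hab2 : a - 1 = b - 1 := hab
      omega


/-- order-preserving insertion: item 0 ↦ position p, item (i+1) ↦ p.succAbove (e i) -/
def Ins {k : ℕ} (p : Fin (k+1)) (e : Perm (Fin k)) : Perm (Fin (k+1)) :=
  (finSuccEquiv k).trans (e.optionCongr.trans (finSuccEquiv' p).symm)

@[simp] lemma Ins_zero {k : ℕ} (p : Fin (k+1)) (e : Perm (Fin k)) : Ins p e 0 = p := by
  simp [Ins]

@[simp] lemma Ins_succ {k : ℕ} (p : Fin (k+1)) (e : Perm (Fin k)) (i : Fin k) :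
    Ins p e i.succ = p.succAbove (e i) := by
  simp [Ins]

lemma Ins_bijective {k : ℕ} :
    Function.Bijective (fun pe : Fin (k+1) × Perm (Fin k) => Ins pe.1 pe.2) := by
  rw [Fintype.bijective_iff_injective_and_card]
  constructor
  · rintro ⟨p, e⟩ ⟨p', e'⟩ h
    simp only at h
    have hp : p = p' := by
      have := congrArg (fun σ : Perm (Fin (k+1)) => σ 0) h
      simpa using this
    subst hp
    have he : e = e' := by
      apply Equiv.ext; intro i
      have := congrArg (fun σ : Perm (Fin (k+1)) => σ i.succ) h
      simp only [Ins_succ] at this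
      exact Fin.succAbove_right_injective this
    rw [he]
  · simp [Fintype.card_perm, Nat.factorial_succ]

/-- the statistic -/
noncomputable def Phi {k : ℕ} (w : Fin (k+1) → ℝ) (β : ℕ) (σ : Perm (Fin (k+1))) : ℝ :=
  ∑ i, w i * ((σ i : ℕ) : ℝ) +
    (β : ℝ) * ∑ i ∈ univ.filter (fun i => σ 0 < σ i), w i

/-- suffix sums -/
noncomputable def Suf {k : ℕ} (w : Fin (k+1) → ℝ) (e : Perm (Fin k)) (m : ℕ) : ℝ :=
  ∑ i ∈ univ.filter (fun i : Fin k => m ≤ (e i : ℕ)), w i.succ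

/-- the walk -/
noncomputable def Hw {k : ℕ} (w : Fin (k+1) → ℝ) (β : ℕ) (e : Perm (Fin k)) (m : ℕ) : ℝ :=
  (∑ i : Fin k, w i.succ * ((e i : ℕ) : ℝ)) + w 0 * m + ((β:ℝ)+1) * Suf w e m

lemma Phi_Ins {k : ℕ} (w : Fin (k+1) → ℝ) (β : ℕ) (e : Perm (Fin k)) (p : Fin (k+1)) :
    Phi w β (Ins p e) = Hw w β e (p : ℕ) := by
  have hpos : ∀ i : Fin k, ((Ins p e i.succ : Fin (k+1)) : ℕ)
      = (e i : ℕ) + (if (p:ℕ) ≤ (e i : ℕ) then 1 else 0) := by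
    intro i
    rw [Ins_succ, coe_succAbove]
    split_ifs with h1 h2 h2 <;> omega
  have hlt : ∀ i : Fin k, (Ins p e 0 < Ins p e i.succ) ↔ (p:ℕ) ≤ (e i : ℕ) := by
    intro i
    rw [Ins_zero, Ins_succ, Fin.lt_def, coe_succAbove]
    split_ifs with h1 <;> omega
  unfold Phi Hw
  rw [Fin.sum_univ_succ (f := fun i => w i * ((Ins p e i : ℕ) : ℝ))]
  rw [sum_filter, Fin.sum_univ_succ (f := fun i => if Ins p e 0 < Ins p e i then w i else 0)]
  simp only [Ins_zero, lt_self_iff_false, if_false, hpos]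
  have h1 : ∀ i : Fin k, w i.succ * (((e i : ℕ) + if (p:ℕ) ≤ (e i:ℕ) then 1 else 0 : ℕ) : ℝ)
      = w i.succ * ((e i : ℕ) : ℝ) + (if (p:ℕ) ≤ (e i:ℕ) then w i.succ else 0) := by
    intro i
    split_ifs with h <;> push_cast <;> ring
  rw [sum_congr rfl (fun i _ => h1 i)]
  rw [sum_add_distrib]
  have h2 : ∀ i : Fin k, (if p < Ins p e i.succ then w i.succ else 0)
      = (if (p:ℕ) ≤ (e i:ℕ) then w i.succ else 0) := by
    intro i
    refine if_congr ?_ rfl rfl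
    rw [Ins_succ, Fin.lt_def, coe_succAbove]
    split_ifs with h1 <;> omega
  rw [sum_congr rfl (fun i _ => h2 i)]
  have h3 : ∑ i : Fin k, (if (p:ℕ) ≤ (e i:ℕ) then w i.succ else 0) = Suf w e (p:ℕ) := by
    rw [Suf, sum_filter]
  rw [h3]
  ring
lemma Suf_step {k : ℕ} (w : Fin (k+1) → ℝ) (e : Perm (Fin k)) (m : ℕ) (hm : m < k) :
    Suf w e m = Suf w e (m+1) + w ((e.symm ⟨m, hm⟩).succ) := by
  unfold Suf
  have hset : univ.filter (fun i : Fin k => m ≤ (e i:ℕ))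
      = insert (e.symm ⟨m,hm⟩) (univ.filter (fun i : Fin k => m+1 ≤ (e i:ℕ))) := by
    ext i
    simp only [mem_filter, mem_univ, true_and, mem_insert]
    constructor
    · intro hi
      rcases Nat.eq_or_lt_of_le hi with heq | hlt
      · left
        have : e i = ⟨m, hm⟩ := Fin.ext heq.symm
        rw [← this, Equiv.symm_apply_apply]
      · right; omega
    · rintro (rfl | hi)
      · simp [Equiv.apply_symm_apply]
      · omega
  rw [hset, sum_insert]
  · ring
  · simp only [mem_filter, mem_univ, true_and, Equiv.apply_symm_apply]
    omega

lemma Hw_mono {k : ℕ} {w : Fin (k+1) → ℝ} {β : ℕ} {z : ℝ}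
    (hw0 : w 0 = ((β:ℝ)+1) * z) (hge : ∀ i : Fin (k+1), i ≠ 0 → z ≤ w i)
    (e : Perm (Fin k)) : ∀ m, m < k → Hw w β e (m+1) ≤ Hw w β e m := by
  intro m hm
  unfold Hw
  rw [Suf_step w e m hm]
  have h1 : z ≤ w ((e.symm ⟨m, hm⟩).succ) := hge _ (Fin.succ_ne_zero _)
  have h2 : (0:ℝ) < (β:ℝ)+1 := by positivity
  push_cast
  nlinarith [hw0]

lemma Hw_plateau {k : ℕ} {w : Fin (k+1) → ℝ} {β : ℕ} {z : ℝ}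
    (hw0 : w 0 = ((β:ℝ)+1) * z)
    (e : Perm (Fin k)) (m : ℕ) (hm : m < k) (hp : Hw w β e m = Hw w β e (m+1)) :
    w ((e.symm ⟨m, hm⟩).succ) = z := by
  unfold Hw at hp
  rw [Suf_step w e m hm] at hp
  have h2 : (0:ℝ) < (β:ℝ)+1 := by positivity
  push_cast at hp
  nlinarith [hp, hw0]

lemma count_decomp {k : ℕ} (w : Fin (k+1) → ℝ) (β : ℕ) (y : ℝ) :
    (univ.filter fun σ : Perm (Fin (k+1)) => Phi w β σ = y).card
      = ∑ e : Perm (Fin k), ((range (k+1)).filter fun m => Hw w β e m = y).card := by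
  rw [Finset.card_filter]
  rw [← Function.Bijective.sum_comp Ins_bijective (fun σ => if Phi w β σ = y then 1 else 0)]
  rw [Fintype.sum_prod_type]
  rw [Finset.sum_comm]
  refine Finset.sum_congr rfl fun e _ => ?_
  rw [Finset.card_filter, ← Fin.sum_univ_eq_sum_range]
  refine Finset.sum_congr rfl fun p _ => ?_
  rw [Phi_Ins]
section Glue

variable {k : ℕ}

/-- arrangement with marked item at position t, others in order e -/
def sigmaOf (e : Perm (Fin (k+1))) (t : Fin (k+1)) : Perm (Fin (k+2)) := Ins t.castSucc e

/-- the glued partner item -/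
def aOf (e : Perm (Fin (k+1))) (t : Fin (k+1)) : Fin (k+2) := ((e.symm t).succ)

lemma aOf_ne_zero (e : Perm (Fin (k+1))) (t : Fin (k+1)) : aOf e t ≠ 0 :=
  Fin.succ_ne_zero _

lemma sigma_zero (e : Perm (Fin (k+1))) (t : Fin (k+1)) : sigmaOf e t 0 = t.castSucc :=
  Ins_zero _ _

lemma sigma_a (e : Perm (Fin (k+1))) (t : Fin (k+1)) : sigmaOf e t (aOf e t) = t.succ := by
  unfold sigmaOf aOf
  rw [Ins_succ, Equiv.apply_symm_apply]
  apply Fin.ext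
  rw [coe_succAbove, Fin.coe_castSucc, if_neg (lt_irrefl _), Fin.val_succ]

lemma sA_zero (e : Perm (Fin (k+1))) (t : Fin (k+1)) : (aOf e t).succAbove 0 = 0 := by
  apply Fin.ext
  rw [coe_succAbove]
  have h0 : ((0 : Fin (k+1)) : ℕ) = 0 := rfl
  have ha : 0 < (aOf e t : ℕ) := by
    unfold aOf; rw [Fin.val_succ]; omega
  rw [h0, if_pos ha]
  rfl

lemma sigma_sA_ne (e : Perm (Fin (k+1))) (t : Fin (k+1)) (j : Fin (k+1)) :
    sigmaOf e t ((aOf e t).succAbove j) ≠ t.succ := by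
  intro hc
  rw [← sigma_a e t] at hc
  exact Fin.succAbove_ne _ j ((sigmaOf e t).injective hc)

/-- contracted arrangement, as a function -/
def etaFun (e : Perm (Fin (k+1))) (t : Fin (k+1)) : Fin (k+1) → Fin (k+1) :=
  fun j => t.predAbove ((sigmaOf e t) ((aOf e t).succAbove j))

lemma etaFun_inj (e : Perm (Fin (k+1))) (t : Fin (k+1)) : Function.Injective (etaFun e t) := by
  intro j1 j2 h
  have h2 := predAbove_inj_off t _ _ (sigma_sA_ne e t j1) (sigma_sA_ne e t j2) h
  exact Fin.succAbove_right_injective ((sigmaOf e t).injective h2)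

/-- contracted arrangement -/
noncomputable def eta (e : Perm (Fin (k+1))) (t : Fin (k+1)) : Perm (Fin (k+1)) :=
  Equiv.ofBijective _ ((Finite.injective_iff_bijective).mp (etaFun_inj e t))

lemma eta_apply (e : Perm (Fin (k+1))) (t : Fin (k+1)) (j : Fin (k+1)) :
    eta e t j = t.predAbove ((sigmaOf e t) ((aOf e t).succAbove j)) := rfl

lemma eta_zero (e : Perm (Fin (k+1))) (t : Fin (k+1)) : eta e t 0 = t := by
  rw [eta_apply, sA_zero, sigma_zero]
  apply Fin.ext
  rw [coe_predAbove, Fin.coe_castSucc, if_neg (lt_irrefl _)]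

lemma eta_val (e : Perm (Fin (k+1))) (t : Fin (k+1)) (j : Fin (k+1)) :
    ((sigmaOf e t ((aOf e t).succAbove j) : Fin (k+2)) : ℕ)
        = (eta e t j : ℕ) + (if t < eta e t j then 1 else 0)
    ∧ ((t:ℕ) < ((sigmaOf e t ((aOf e t).succAbove j) : Fin (k+2)) : ℕ) ↔ t < eta e t j) := by
  set q := sigmaOf e t ((aOf e t).succAbove j) with hqdef
  have hq : q ≠ t.succ := sigma_sA_ne e t j
  have hqv : (q : ℕ) ≠ (t : ℕ) + 1 := by
    intro hc
    exact hq (Fin.ext (by rw [hc, Fin.val_succ]))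
  have hval : (eta e t j : ℕ) = if (t:ℕ) < (q:ℕ) then (q:ℕ) - 1 else (q:ℕ) :=
    coe_predAbove t q
  have hqk : (q : ℕ) < k + 2 := q.isLt
  simp only [Fin.lt_def]
  rcases le_or_gt (q:ℕ) (t:ℕ) with hle | hlt
  · rw [if_neg (by omega)] at hval
    constructor
    · rw [if_neg (by omega)]; omega
    · omega
  · rw [if_pos hlt] at hval
    have : (t:ℕ) + 2 ≤ (q:ℕ) := by omega
    constructor
    · rw [if_pos (by omega)]; omega
    · omega

lemma glue_id (w : Fin (k+2) → ℝ) (β : ℕ) (z : ℝ)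
    (e : Perm (Fin (k+1))) (t : Fin (k+1))
    (hz : w (aOf e t) = z) :
    Phi w β (sigmaOf e t)
      = Phi (Function.update (w ∘ (aOf e t).succAbove) 0 (w 0 + z)) (β+1) (eta e t)
        + ((β:ℝ)+1) * z := by
  set a := aOf e t with ha
  set σ := sigmaOf e t with hσdef
  set η := eta e t with hηdef
  set w' := Function.update (w ∘ a.succAbove) 0 (w 0 + z) with hw'
  have hσ0 : σ 0 = t.castSucc := sigma_zero e t
  have hσa : σ a = t.succ := sigma_a e t
  have hσa_val : ((σ a : Fin (k+2)):ℕ) = (t:ℕ)+1 := by rw [hσa, Fin.val_succ]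
  have hcond_a : σ 0 < σ a := by
    rw [hσ0, hσa, Fin.lt_def, Fin.coe_castSucc, Fin.val_succ]; omega
  have hη0 : η 0 = t := eta_zero e t
  have hw'0 : w' 0 = w 0 + z := by rw [hw']; simp
  have hw'j : ∀ j : Fin (k+1), j ≠ 0 → w' j = w (a.succAbove j) := by
    intro j hj
    rw [hw', Function.update_of_ne hj]
    rfl
  have hw0' : w (a.succAbove 0) = w 0 := by rw [sA_zero]
  have key : ∀ j : Fin (k+1),
      w (a.succAbove j) * ((σ (a.succAbove j) : ℕ):ℝ)
        + (β:ℝ) * (if σ 0 < σ (a.succAbove j) then w (a.succAbove j) else 0)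
      = w' j * ((η j : ℕ):ℝ) + ((β:ℝ)+1) * (if η 0 < η j then w' j else 0)
        - (if j = 0 then z * ((t:ℕ):ℝ) else 0) := by
    intro j
    have hv := (eta_val e t j).1
    have hiff := (eta_val e t j).2
    have hcond : (σ 0 < σ (a.succAbove j)) ↔ (t < η j) := by
      rw [hσ0, Fin.lt_def, Fin.coe_castSucc]; exact hiff
    have hcond' : (η 0 < η j) ↔ (t < η j) := by rw [hη0]
    by_cases hj : j = 0
    · subst hj
      have h1 : ¬ (t < η 0) := by rw [hη0]; exact lt_irrefl t
      rw [if_pos rfl, if_neg (fun h => h1 (hcond.mp h)), if_neg (fun h => h1 (hcond'.mp h))]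
      have h2 : ((σ (a.succAbove 0) : ℕ):ℝ) = ((η 0 : ℕ):ℝ) := by
        rw [hv, if_neg h1]; norm_num; rfl
      rw [hw0', hw'0, h2, hη0]
      ring
    · rw [hw'j j hj, if_neg hj, hv]
      push_cast
      by_cases hc : t < η j
      · rw [if_pos (hcond.mpr hc), if_pos (hcond'.mpr hc), if_pos hc]; ring
      · rw [if_neg (fun h => hc (hcond.mp h)), if_neg (fun h => hc (hcond'.mp h)), if_neg hc]
        ring
  have L : Phi w β σ
      = z * (((t:ℕ):ℝ)+1) + (β:ℝ) * z
        + ∑ j : Fin (k+1), (w (a.succAbove j) * ((σ (a.succAbove j) : ℕ):ℝ)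
            + (β:ℝ) * (if σ 0 < σ (a.succAbove j) then w (a.succAbove j) else 0)) := by
    unfold Phi
    rw [Fin.sum_univ_succAbove (fun i => w i * ((σ i : ℕ):ℝ)) a]
    rw [sum_filter]
    rw [Fin.sum_univ_succAbove (fun i => if σ 0 < σ i then w i else 0) a]
    rw [if_pos hcond_a, hz, hσa_val]
    push_cast
    rw [sum_add_distrib, ← Finset.mul_sum]
    ring
  have R : Phi w' (β+1) η
      = ∑ j : Fin (k+1), (w' j * ((η j : ℕ):ℝ)
          + ((β:ℝ)+1) * (if η 0 < η j then w' j else 0)) := by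
    unfold Phi
    rw [sum_filter]
    push_cast
    rw [sum_add_distrib, ← Finset.mul_sum]
  have S : ∑ j : Fin (k+1), (w (a.succAbove j) * ((σ (a.succAbove j) : ℕ):ℝ)
            + (β:ℝ) * (if σ 0 < σ (a.succAbove j) then w (a.succAbove j) else 0))
      = (∑ j : Fin (k+1), (w' j * ((η j : ℕ):ℝ)
          + ((β:ℝ)+1) * (if η 0 < η j then w' j else 0)))
        - z * ((t:ℕ):ℝ) := by
    rw [sum_congr rfl (fun j _ => key j), sum_sub_distrib]
    congr 1
    rw [Finset.sum_ite_eq' univ (0 : Fin (k+1)) (fun _ => z * ((t:ℕ):ℝ))]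
    simp
  rw [L, S, ← R]
  ring

end Glue
lemma succAbove_ne_zero' {k : ℕ} (p : Fin (k+2)) (i : Fin (k+1)) (hi : i ≠ 0) :
    p.succAbove i ≠ 0 := by
  intro hc
  have hv := congrArg (fun x : Fin (k+2) => (x:ℕ)) hc
  simp only [coe_succAbove] at hv
  have hiv : (i:ℕ) ≠ 0 := fun h => hi (Fin.ext h)
  split_ifs at hv <;> simp at hv <;> omega

lemma eta_reconstruct {k : ℕ} (e e' : Perm (Fin (k+1))) (t : Fin (k+1))
    (hd : e.symm t = e'.symm t) (hη : eta e t = eta e' t) : e = e' := by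
  have haa : aOf e t = aOf e' t := by unfold aOf; rw [hd]
  have hσ : sigmaOf e t = sigmaOf e' t := by
    apply Equiv.ext
    intro b
    rcases eq_or_ne b (aOf e t) with rfl | hba
    · rw [sigma_a]
      rw [haa, sigma_a]
    · obtain ⟨j, hj⟩ := Fin.exists_succAbove_eq hba
      have h1 : eta e t j = eta e' t j := by rw [hη]
      rw [eta_apply, eta_apply] at h1
      have h2 : sigmaOf e t ((aOf e t).succAbove j)
          = sigmaOf e' t ((aOf e' t).succAbove j) :=
        predAbove_inj_off t _ _ (sigma_sA_ne e t j) (sigma_sA_ne e' t j) h1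
      have hj' : (aOf e' t).succAbove j = b := by rw [← haa]; exact hj
      rw [hj] at h2
      rw [hj'] at h2
      exact h2
  have hpair : ((t.castSucc, e) : Fin (k+2) × Perm (Fin (k+1))) = (t.castSucc, e') :=
    Ins_bijective.injective hσ
  exact congrArg Prod.snd hpair

def Bfun : ℕ → ℕ → ℕ
  | K, 0 => (K-1).factorial
  | K, (j+1) => (K-1).factorial + (j+1) * Bfun (K-1) j

lemma Bfun_le : ∀ (j K : ℕ), 2*(j+1) ≤ K → Bfun K j ≤ 2 * (K-1).factorial := by
  intro j
  induction j with
  | zero =>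
    intro K h
    show Bfun K 0 ≤ 2 * (K-1).factorial
    rw [Bfun]
    omega
  | succ j ih =>
    intro K h
    rw [Bfun]
    have h1 : Bfun (K-1) j ≤ 2 * ((K-1)-1).factorial := ih (K-1) (by omega)
    have h2 : (K-1) - 1 = K - 2 := by omega
    rw [h2] at h1
    have h3 : (K-1).factorial = (K-1) * (K-2).factorial := by
      have he : K - 1 = (K-2) + 1 := by omega
      rw [he, Nat.factorial_succ]
    have h4 : (j+1) * Bfun (K-1) j ≤ (j+1) * (2 * (K-2).factorial) :=
      Nat.mul_le_mul_left _ h1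
    have h5 : (j+1) * (2 * (K-2).factorial) ≤ (K-1) * (K-2).factorial := by
      have h6 : (j+1) * (2 * (K-2).factorial) = ((j+1)*2) * (K-2).factorial := by ring
      rw [h6]
      exact Nat.mul_le_mul_right _ (by omega)
    omega

lemma count_le_plateau {k : ℕ} {w : Fin (k+1) → ℝ} {β : ℕ} {z : ℝ}
    (hw0 : w 0 = ((β:ℝ)+1) * z) (hge : ∀ i : Fin (k+1), i ≠ 0 → z ≤ w i) (y : ℝ) :
    (univ.filter fun σ : Perm (Fin (k+1)) => Phi w β σ = y).card
      ≤ Nat.factorial k + ∑ e : Perm (Fin k),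
          ((range k).filter (fun m => Hw w β e m = y ∧ Hw w β e (m+1) = y)).card := by
  rw [count_decomp]
  have h1 : ∀ e : Perm (Fin k), ((range (k+1)).filter fun m => Hw w β e m = y).card
      ≤ 1 + ((range k).filter (fun m => Hw w β e m = y ∧ Hw w β e (m+1) = y)).card :=
    fun e => walk_bound _ k (Hw_mono hw0 hge e) y
  calc ∑ e : Perm (Fin k), ((range (k+1)).filter fun m => Hw w β e m = y).card
      ≤ ∑ e : Perm (Fin k), (1 + ((range k).filter
          (fun m => Hw w β e m = y ∧ Hw w β e (m+1) = y)).card) :=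
        sum_le_sum (fun e _ => h1 e)
    _ = _ := by
        rw [sum_add_distrib, sum_const, card_univ, Fintype.card_perm, Fintype.card_fin,
          smul_eq_mul, mul_one]
lemma key : ∀ (j : ℕ) (k : ℕ) (w : Fin (k+1) → ℝ) (β : ℕ) (z y : ℝ),
    w 0 = ((β:ℝ)+1) * z →
    (∀ i : Fin (k+1), i ≠ 0 → z ≤ w i) →
    ((univ.filter (fun i : Fin (k+1) => i ≠ 0 ∧ w i = z)).card ≤ j) →
    ((univ.filter fun σ : Perm (Fin (k+1)) => Phi w β σ = y).card ≤ Bfun (k+1) j) := by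
  intro j
  induction j with
  | zero =>
    intro k w β z y hw0 hge hcard
    have hempty : ∀ e : Perm (Fin k),
        ((range k).filter (fun m => Hw w β e m = y ∧ Hw w β e (m+1) = y)) = ∅ := by
      intro e
      rw [Finset.filter_eq_empty_iff]
      intro m hm hc
      have hmk : m < k := mem_range.mp hm
      have hz' : w ((e.symm ⟨m,hmk⟩).succ) = z :=
        Hw_plateau hw0 e m hmk (hc.1.trans hc.2.symm)
      have hmem : (e.symm ⟨m,hmk⟩).succ ∈ univ.filter
          (fun i : Fin (k+1) => i ≠ 0 ∧ w i = z) := by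
        simp [Fin.succ_ne_zero, hz']
      have := card_pos.mpr ⟨_, hmem⟩
      omega
    have := count_le_plateau hw0 hge y
    simp only [hempty, card_empty, sum_const_zero, add_zero] at this
    calc _ ≤ Nat.factorial k := this
      _ = Bfun (k+1) 0 := by rw [Bfun]; simp
  | succ j ih =>
    intro k w β z y hw0 hge hcard
    rcases k with _ | k'
    · -- k = 0 : no plateaus possible
      have hempty : ∀ e : Perm (Fin 0),
          ((range 0).filter (fun m => Hw w β e m = y ∧ Hw w β e (m+1) = y)) = ∅ := by
        intro e; simp
      have := count_le_plateau hw0 hge y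
      simp only [hempty, card_empty, sum_const_zero, add_zero, Nat.factorial_zero] at this
      calc _ ≤ 1 := this
        _ ≤ Bfun 1 (j+1) := by rw [Bfun]; simp [Nat.factorial]
    · -- k = k'+1
      set G := univ.filter (fun d : Fin (k'+1) => w d.succ = z) with hG
      set instW := fun d : Fin (k'+1) =>
        Function.update (w ∘ (Fin.succ d).succAbove) 0 (w 0 + z) with hinstW
      set y' := y - ((β:ℝ)+1) * z with hy'
      set instL := fun d : Fin (k'+1) =>
        univ.filter (fun η : Perm (Fin (k'+1)) => Phi (instW d) (β+1) η = y') with hinstL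
      set bigF := univ.filter (fun i : Fin (k'+2) => i ≠ 0 ∧ w i = z) with hbigF
      -- plateau pair set
      set PP := ((univ : Finset (Perm (Fin (k'+1)))) ×ˢ range (k'+1)).filter
        (fun em : Perm (Fin (k'+1)) × ℕ =>
          Hw w β em.1 em.2 = y ∧ Hw w β em.1 (em.2+1) = y) with hPP
      have hL : ∑ e : Perm (Fin (k'+1)), ((range (k'+1)).filter
          (fun m => Hw w β e m = y ∧ Hw w β e (m+1) = y)).card = PP.card := by
        rw [hPP, Finset.card_filter, Finset.sum_product]
        refine sum_congr rfl fun e _ => ?_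
        rw [Finset.card_filter]
      -- the injection into sigma
      have hinj : PP.card ≤ ∑ d ∈ G, (instL d).card := by
        rw [← card_sigma]
        set F : (Perm (Fin (k'+1)) × ℕ) → ((_ : Fin (k'+1)) × Perm (Fin (k'+1))) :=
          fun em => if h : em.2 < k'+1
            then ⟨(em.1).symm ⟨em.2, h⟩, eta em.1 ⟨em.2, h⟩⟩ else ⟨0, 1⟩ with hF
        apply card_le_card_of_injOn F
        · -- maps to
          rintro ⟨e, m⟩ hem
          rw [hPP, mem_coe, mem_filter, mem_product, mem_range] at hem
          obtain ⟨⟨-, hmk⟩, hp1, hp2⟩ := hem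
          rw [hF]
          simp only [dif_pos hmk]
          set t : Fin (k'+1) := ⟨m, hmk⟩ with ht
          set d := e.symm t with hd
          have hdz : w d.succ = z := Hw_plateau hw0 e m hmk (hp1.trans hp2.symm)
          rw [mem_coe, mem_sigma]
          constructor
          · rw [hG, mem_filter]; exact ⟨mem_univ _, hdz⟩
          · rw [hinstL]
            simp only [mem_filter, mem_univ, true_and]
            have haof : aOf e t = d.succ := rfl
            have hglue := glue_id w β z e t (by rw [haof]; exact hdz)
            have hphi : Phi w β (sigmaOf e t) = y := by
              have := Phi_Ins w β e t.castSucc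
              rw [Fin.coe_castSucc] at this
              show Phi w β (Ins t.castSucc e) = y
              rw [this]
              exact hp1
            have hiw : instW d = Function.update (w ∘ (aOf e t).succAbove) 0 (w 0 + z) := by
              rw [hinstW, haof]
            rw [hiw, hy']
            rw [hphi] at hglue
            linarith [hglue]
        · -- injective
          rintro ⟨e, m⟩ hem ⟨e', m'⟩ hem' hFeq
          rw [coe_filter] at hem hem'
          simp only [Set.mem_setOf_eq, mem_product, mem_range] at hem hem'
          have hmk : m < k'+1 := hem.1.2
          have hmk' : m' < k'+1 := hem'.1.2
          rw [hF] at hFeq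
          simp only [dif_pos hmk, dif_pos hmk'] at hFeq
          have hfst := congrArg Sigma.fst hFeq
          simp only at hfst
          have hsnd : eta e ⟨m, hmk⟩ = eta e' ⟨m', hmk'⟩ := by
            have := congrArg Sigma.snd hFeq
            exact eq_of_heq (Sigma.mk.inj_iff.mp hFeq).2
          have htm : (⟨m, hmk⟩ : Fin (k'+1)) = ⟨m', hmk'⟩ := by
            rw [← eta_zero e ⟨m, hmk⟩, ← eta_zero e' ⟨m', hmk'⟩, hsnd]
          have hmm : m = m' := congrArg Fin.val htm
          subst hmm
          have htm2 : (⟨m, hmk⟩ : Fin (k'+1)) = ⟨m, hmk'⟩ := rfl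
          have hee : e = e' := by
            apply eta_reconstruct e e' ⟨m, hmk⟩
            · rw [hfst]
            · rw [hsnd]
          rw [hee]
      -- apply IH to each instance
      have hinst : ∀ d ∈ G, (instL d).card ≤ Bfun (k'+1) j := by
        intro d hd
        have hdz : w d.succ = z := by
          rw [hG, mem_filter] at hd; exact hd.2
        have hdmem : d.succ ∈ bigF := by
          rw [hbigF, mem_filter]
          exact ⟨mem_univ _, Fin.succ_ne_zero _, hdz⟩
        apply ih k' (instW d) (β+1) z y'
        · rw [hinstW]
          simp only [Function.update_self]
          rw [hw0]
          push_cast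
          ring
        · intro i hi
          rw [hinstW]
          simp only [Function.update_of_ne hi]
          exact hge _ (succAbove_ne_zero' _ _ hi)
        · -- gluable count decreased
          have hstep : (univ.filter (fun i : Fin (k'+1) => i ≠ 0 ∧ instW d i = z)).card
              ≤ (bigF.erase d.succ).card := by
            apply card_le_card_of_injOn (fun i => (Fin.succ d).succAbove i)
            · intro i hi
              rw [mem_coe, mem_filter] at hi
              obtain ⟨-, hi0, hiz⟩ := hi
              rw [mem_coe, mem_erase, hbigF, mem_filter]
              refine ⟨Fin.succAbove_ne _ _, mem_univ _, succAbove_ne_zero' _ _ hi0, ?_⟩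
              rw [hinstW] at hiz
              simp only [Function.update_of_ne hi0] at hiz
              exact hiz
            · exact Fin.succAbove_right_injective.injOn
          have herase : (bigF.erase d.succ).card = bigF.card - 1 :=
            card_erase_of_mem hdmem
          have hbig1 : 1 ≤ bigF.card := card_pos.mpr ⟨_, hdmem⟩
          omega
      -- G.card ≤ j+1
      have hGcard : G.card ≤ j + 1 := by
        have : G.card ≤ bigF.card := by
          apply card_le_card_of_injOn (fun d => Fin.succ d)
          · intro d hd
            rw [hG, mem_coe, mem_filter] at hd
            rw [mem_coe, hbigF, mem_filter]
            exact ⟨mem_univ _, Fin.succ_ne_zero _, hd.2⟩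
          · exact fun a _ b _ h => Fin.succ_injective _ h
        omega
      -- put together
      have hmain := count_le_plateau hw0 hge y
      have hsum : ∑ d ∈ G, (instL d).card ≤ (j+1) * Bfun (k'+1) j := by
        calc ∑ d ∈ G, (instL d).card ≤ ∑ _d ∈ G, Bfun (k'+1) j := sum_le_sum hinst
          _ = G.card * Bfun (k'+1) j := by rw [sum_const, smul_eq_mul]
          _ ≤ (j+1) * Bfun (k'+1) j := Nat.mul_le_mul_right _ hGcard
      have hBfun : Bfun (k'+1+1) (j+1) = Nat.factorial (k'+1) + (j+1) * Bfun (k'+1) j := by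
        rw [Bfun]
        norm_num
      omega
lemma aux {k : ℕ} (w : Fin (k+1) → ℝ) (x z : ℝ)
    (hmin : ∀ i, z ≤ w i)
    (hne : ∃ c, w c = z)
    (hhalf : 2 * (univ.filter (fun i => w i = z)).card ≤ k + 1) :
    (univ.filter fun σ : Perm (Fin (k+1)) => ∑ i, w i * ((σ i : ℕ):ℝ) = x).card
      ≤ 2 * Nat.factorial k := by
  obtain ⟨c, hc⟩ := hne
  set s := Equiv.swap (0 : Fin (k+1)) c with hs
  set w₂ := w ∘ s with hw₂
  have hss : ∀ i, s (s i) = i := fun i => Equiv.swap_apply_self _ _ i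
  -- card equality via bijection  τ ↦ s.trans τ
  have hsum : ∀ τ : Perm (Fin (k+1)),
      ∑ i, w₂ i * (((s.trans τ) i : ℕ):ℝ) = ∑ i, w i * ((τ i : ℕ):ℝ) := by
    intro τ
    have := Equiv.sum_comp s (fun i => w i * ((τ i : ℕ):ℝ))
    rw [← this]
    refine sum_congr rfl fun i _ => ?_
    simp [hw₂, Equiv.trans_apply]
  have hcardeq : (univ.filter fun σ : Perm (Fin (k+1)) => ∑ i, w i * ((σ i : ℕ):ℝ) = x).card
      = (univ.filter fun σ : Perm (Fin (k+1)) => ∑ i, w₂ i * ((σ i : ℕ):ℝ) = x).card := by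
    apply Finset.card_bij' (fun τ _ => s.trans τ) (fun σ _ => s.trans σ)
    · intro τ hτ
      rw [mem_filter] at hτ ⊢
      refine ⟨mem_univ _, ?_⟩
      rw [hsum τ]
      exact hτ.2
    · intro σ hσ
      rw [mem_filter] at hσ ⊢
      refine ⟨mem_univ _, ?_⟩
      rw [← hsum (s.trans σ)]
      have : s.trans (s.trans σ) = σ := by
        apply Equiv.ext; intro i; simp [Equiv.trans_apply, hss]
      rw [this] at *
      exact hσ.2
    · intro τ _
      apply Equiv.ext; intro i; simp [Equiv.trans_apply, hss]
    · intro σ _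
      apply Equiv.ext; intro i; simp [Equiv.trans_apply, hss]
  rw [hcardeq]
  -- apply key
  have hw₂0 : w₂ 0 = z := by
    rw [hw₂]
    simp [hs, Equiv.swap_apply_left, hc]
  set cls := univ.filter (fun i : Fin (k+1) => w i = z) with hcls
  set cls₂ := univ.filter (fun i : Fin (k+1) => w₂ i = z) with hcls₂
  have hclseq : cls₂.card = cls.card := by
    apply Finset.card_bij' (fun i _ => s i) (fun i _ => s i)
    · intro i hi
      rw [mem_filter] at hi ⊢
      exact ⟨mem_univ _, hi.2⟩
    · intro i hi
      rw [mem_filter] at hi ⊢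
      refine ⟨mem_univ _, ?_⟩
      rw [hw₂]
      simpa [hss] using hi.2
    · intro i _; exact hss i
    · intro i _; exact hss i
  have hcls1 : 1 ≤ cls.card := by
    apply card_pos.mpr ⟨c, ?_⟩
    rw [hcls, mem_filter]; exact ⟨mem_univ _, hc⟩
  have hglue : (univ.filter (fun i : Fin (k+1) => i ≠ 0 ∧ w₂ i = z)).card = cls₂.card - 1 := by
    have : univ.filter (fun i : Fin (k+1) => i ≠ 0 ∧ w₂ i = z) = cls₂.erase 0 := by
      ext i
      rw [mem_filter, mem_erase, hcls₂, mem_filter]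
      tauto
    rw [this, card_erase_of_mem]
    rw [hcls₂, mem_filter]
    exact ⟨mem_univ _, hw₂0⟩
  have hkey := key (cls.card - 1) k w₂ 0 z x
    (by rw [hw₂0]; norm_num)
    (fun i _ => by rw [hw₂]; exact hmin (s i))
    (by rw [hglue, hclseq])
  have hB := Bfun_le (cls.card - 1) (k+1) (by omega)
  have hfilter : (univ.filter fun σ : Perm (Fin (k+1)) => ∑ i, w₂ i * ((σ i : ℕ):ℝ) = x)
      = (univ.filter fun σ : Perm (Fin (k+1)) => Phi w₂ 0 σ = x) := by
    apply filter_congr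
    intro σ _
    unfold Phi
    norm_num
  rw [hfilter]
  calc _ ≤ Bfun (k+1) (cls.card - 1) := hkey
    _ ≤ 2 * (k+1-1).factorial := hB
    _ = 2 * Nat.factorial k := by norm_num
end Soze

/-- Soze's theorem (point mass version): for `v = (1,2,…,n)` and `w` a unit vector with
`∑ w i = 0`, `P(w_π ⬝ v = x) ≤ C/n` for every `x`. -/
theorem stmt_6 :
    ∃ C : ℝ, 0 < C ∧ ∀ (n : ℕ) (w : Fin n → ℝ),
      (∑ i, (w i) ^ 2 = 1) → (∑ i, w i = 0) →
      ∀ x : ℝ,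
        ((Finset.univ.filter (fun π : Equiv.Perm (Fin n) =>
            ∑ i, w (π i) * ((i : ℕ) + 1 : ℝ) = x)).card : ℝ) / (Nat.factorial n : ℝ)
          ≤ C / n := by
  refine ⟨2, by norm_num, ?_⟩
  intro n w hw2 hw0 x
  rcases n with _ | k
  · simp at hw2
  -- reindex to σ = π⁻¹ and drop the +1 shift
  have hiff : ∀ π : Equiv.Perm (Fin (k+1)),
      (∑ i, w (π i) * ((i:ℕ) + 1 : ℝ) = x) ↔ (∑ i, w i * ((π⁻¹ i : ℕ):ℝ) = x) := by
    intro π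
    have h1 : ∑ i, w (π i) * ((i:ℕ) + 1 : ℝ) = ∑ a, w a * (((π⁻¹ a : Fin (k+1)):ℕ) + 1 : ℝ) := by
      rw [← Equiv.sum_comp π (fun a => w a * (((π⁻¹ a : Fin (k+1)):ℕ) + 1 : ℝ))]
      refine Finset.sum_congr rfl fun i _ => ?_
      rw [Equiv.Perm.coe_inv, Equiv.symm_apply_apply]
    have h2 : ∑ a, w a * (((π⁻¹ a : Fin (k+1)):ℕ) + 1 : ℝ)
        = (∑ a, w a * (((π⁻¹ a : Fin (k+1)):ℕ):ℝ)) + ∑ a, w a := by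
      rw [← Finset.sum_add_distrib]
      refine Finset.sum_congr rfl fun a _ => ?_
      ring
    rw [h1, h2, hw0, add_zero]
  have hcount : (Finset.univ.filter (fun π : Equiv.Perm (Fin (k+1)) =>
        ∑ i, w (π i) * ((i:ℕ) + 1 : ℝ) = x)).card
      = (Finset.univ.filter (fun σ : Equiv.Perm (Fin (k+1)) =>
        ∑ i, w i * ((σ i : ℕ):ℝ) = x)).card := by
    refine Finset.card_bij' (fun π _ => π⁻¹) (fun σ _ => σ⁻¹) ?_ ?_ ?_ ?_
    case _ =>
      intro π hπ
      rw [Finset.mem_filter] at hπ ⊢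
      exact ⟨Finset.mem_univ _, (hiff π).mp hπ.2⟩
    case _ =>
      intro σ hσ
      rw [Finset.mem_filter] at hσ ⊢
      refine ⟨Finset.mem_univ _, (hiff σ⁻¹).mpr ?_⟩
      rw [inv_inv]
      exact hσ.2
    case _ => intro π _; exact inv_inv π
    case _ => intro σ _; exact inv_inv σ
  -- min and max values
  have hnu : (Finset.univ : Finset (Fin (k+1))).Nonempty := ⟨0, Finset.mem_univ 0⟩
  set z₁ := Finset.univ.inf' hnu w with hz₁
  set z₂ := Finset.univ.sup' hnu w with hz₂
  have hz₁le : ∀ i, z₁ ≤ w i := fun i => Finset.inf'_le w (Finset.mem_univ i)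
  have hz₂le : ∀ i, w i ≤ z₂ := fun i => Finset.le_sup' w (Finset.mem_univ i)
  obtain ⟨c₁, -, hc₁⟩ := Finset.exists_mem_eq_inf' hnu w
  obtain ⟨c₂, -, hc₂⟩ := Finset.exists_mem_eq_sup' hnu w
  have hne12 : z₁ ≠ z₂ := by
    intro heq
    have hconst : ∀ i, w i = z₁ := fun i => le_antisymm (heq ▸ hz₂le i) (hz₁le i)
    have hsum : ∑ i : Fin (k+1), w i = (k+1 : ℝ) * z₁ := by
      rw [Finset.sum_congr rfl (fun i _ => hconst i), Finset.sum_const, Finset.card_univ,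
        Fintype.card_fin, nsmul_eq_mul]
      push_cast
      ring
    rw [hw0] at hsum
    have hz0 : z₁ = 0 := by
      have : (k+1:ℝ) ≠ 0 := by positivity
      exact (mul_eq_zero.mp hsum.symm).resolve_left this
    have : ∑ i : Fin (k+1), (w i)^2 = 0 := by
      rw [Finset.sum_congr rfl (fun i _ => by rw [hconst i, hz0])]
      simp
    rw [hw2] at this
    norm_num at this
  set m₁ := (Finset.univ.filter (fun i : Fin (k+1) => w i = z₁)).card with hm₁
  set m₂ := (Finset.univ.filter (fun i : Fin (k+1) => w i = z₂)).card with hm₂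
  have hdisj : m₁ + m₂ ≤ k + 1 := by
    have hd : Disjoint (Finset.univ.filter (fun i : Fin (k+1) => w i = z₁))
        (Finset.univ.filter (fun i : Fin (k+1) => w i = z₂)) := by
      rw [Finset.disjoint_filter]
      intro i _ h1 h2
      exact hne12 (h1 ▸ h2 ▸ rfl)
    calc m₁ + m₂ = ((Finset.univ.filter (fun i : Fin (k+1) => w i = z₁))
          ∪ (Finset.univ.filter (fun i : Fin (k+1) => w i = z₂))).card :=
        (Finset.card_union_of_disjoint hd).symm
      _ ≤ (Finset.univ : Finset (Fin (k+1))).card := Finset.card_le_card (Finset.subset_univ _)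
      _ = k + 1 := by rw [Finset.card_univ, Fintype.card_fin]
  -- main bound
  have hbound : (Finset.univ.filter (fun σ : Equiv.Perm (Fin (k+1)) =>
      ∑ i, w i * ((σ i : ℕ):ℝ) = x)).card ≤ 2 * Nat.factorial k := by
    rcases le_or_gt (2 * m₁) (k+1) with hcase | hcase
    · exact Soze.aux w x z₁ hz₁le ⟨c₁, hc₁.symm⟩ hcase
    · have hcase2 : 2 * m₂ ≤ k + 1 := by omega
      have hfilter : (Finset.univ.filter (fun σ : Equiv.Perm (Fin (k+1)) =>
            ∑ i, w i * ((σ i : ℕ):ℝ) = x))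
          = (Finset.univ.filter (fun σ : Equiv.Perm (Fin (k+1)) =>
            ∑ i, (fun i => -w i) i * ((σ i : ℕ):ℝ) = -x)) := by
        apply Finset.filter_congr
        intro σ _
        simp only
        constructor
        · intro h
          rw [← h]
          rw [← Finset.sum_neg_distrib]
          exact Finset.sum_congr rfl fun i _ => by ring
        · intro h
          have : ∑ i, -(w i * ((σ i : ℕ):ℝ)) = -x := by
            rw [← h]
            exact Finset.sum_congr rfl fun i _ => by ring
          rw [Finset.sum_neg_distrib, neg_eq_iff_eq_neg] at this
          rw [this]
          ring
      rw [hfilter]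
      apply Soze.aux (fun i => -w i) (-x) (-z₂) (fun i => by simp [hz₂le i]) ⟨c₂, show -w c₂ = -z₂ by rw [hz₂, hc₂]⟩
      have : (Finset.univ.filter (fun i : Fin (k+1) => -w i = -z₂))
          = (Finset.univ.filter (fun i : Fin (k+1) => w i = z₂)) := by
        apply Finset.filter_congr
        intro i _
        constructor
        · intro h; linarith [h]
        · intro h; rw [h]
      rw [this]
      exact hcase2
  rw [hcount]
  -- final arithmetic
  have hfac : (Nat.factorial (k+1) : ℝ) = (k+1 : ℝ) * (Nat.factorial k : ℝ) := by
    rw [Nat.factorial_succ]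
    push_cast
    ring
  have hfacpos : (0:ℝ) < (Nat.factorial (k+1) : ℝ) := by positivity
  have hnpos : (0:ℝ) < ((k:ℕ):ℝ) + 1 := by positivity
  rw [div_le_div_iff₀ hfacpos (by push_cast; linarith)]
  have hcb : ((Finset.univ.filter (fun σ : Equiv.Perm (Fin (k+1)) =>
      ∑ i, w i * ((σ i : ℕ):ℝ) = x)).card : ℝ) ≤ 2 * (Nat.factorial k : ℝ) := by
    exact_mod_cast hbound
  have : ((k+1 : ℕ):ℝ) = (k:ℝ) + 1 := by push_cast; ring
  push_cast
  nlinarith [hcb, hfacpos, hnpos, (Nat.cast_pos (α := ℝ)).mpr (Nat.factorial_pos k)]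
end

section
/- Let w ∈ ℝ^n with ∑_i w_i = 0 and σ² = ∑_i w_i², and suppose w is nondecreasing. Let j be the largest index with w_j < 0 and assume j ≤ n/2. If ∑_{k ≤ j} w_k² ≤ σ²/100, then w_{⌈n/2⌉} ≤ σ/(5√n). -/
open scoped Classical
open Finset

/-- If `w` is nondecreasing with `∑ w = 0`, `σ² = ∑ w²`, `j` is the largest (0-based)
index with `w j < 0`, the number of negative entries `j+1` is at most `n/2`, and
`∑_{i ≤ j} w i² ≤ σ²/100`, then the median entry `w_{⌈n/2⌉}` (1-based) is at most
`σ/(5√n)`. -/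
theorem stmt_15 (n : ℕ) (hn : 1 ≤ n) (w : Fin n → ℝ) (hmono : Monotone w)
    (hsum : ∑ i, w i = 0) (σ : ℝ) (hσdef : σ = Real.sqrt (∑ i, (w i) ^ 2)) (hσ : 0 < σ)
    (j : Fin n) (hj : w j < 0) (hjmax : ∀ i : Fin n, w i < 0 → i ≤ j)
    (hjhalf : ((j : ℕ) + 1 : ℝ) ≤ (n : ℝ) / 2)
    (hlow : ∑ i ∈ Finset.Iic j, (w i) ^ 2 ≤ σ ^ 2 / 100) :
    w ⟨(n + 1) / 2 - 1, by omega⟩ ≤ σ / (5 * Real.sqrt n) := by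
  set M : Fin n := ⟨(n + 1) / 2 - 1, by omega⟩ with hM
  have hn0 : (0:ℝ) ≤ n := by positivity
  have hspos : 0 < Real.sqrt n := Real.sqrt_pos.mpr (by exact_mod_cast hn)
  have hs : Real.sqrt n ^ 2 = (n:ℝ) := Real.sq_sqrt hn0
  -- nonnegativity above j
  have hnonneg : ∀ i : Fin n, j < i → 0 ≤ w i := by
    intro i hi
    by_contra h
    exact absurd (hjmax i (lt_of_not_ge h)) (not_le.mpr hi)
  -- σ^2 = sum of squares
  have hσ2 : σ ^ 2 = ∑ i, (w i) ^ 2 := by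
    rw [hσdef, Real.sq_sqrt (by positivity)]
  -- split sum
  have hsplit : Finset.Iic j ∪ Finset.Ioi j = Finset.univ := by
    ext i; simp [le_or_gt i j]
  have hdisj : Disjoint (Finset.Iic j) (Finset.Ioi j) := by
    simp [Finset.disjoint_left]
  set S1 := ∑ i ∈ Finset.Iic j, w i with hS1
  set S2 := ∑ i ∈ Finset.Ioi j, w i with hS2
  have hS12 : S1 + S2 = 0 := by
    rw [hS1, hS2, ← Finset.sum_union hdisj, hsplit, hsum]
  have hS2nn : 0 ≤ S2 := Finset.sum_nonneg fun i hi => hnonneg i (Finset.mem_Ioi.mp hi)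
  -- Cauchy–Schwarz
  have hcard : ((Finset.Iic j).card : ℝ) ≤ n := by
    rw [Fin.card_Iic]
    push_cast
    linarith
  have hCS : S1 ^ 2 ≤ (n:ℝ) * (σ ^ 2 / 100) := by
    calc S1 ^ 2 ≤ (Finset.Iic j).card * ∑ i ∈ Finset.Iic j, (w i) ^ 2 :=
          sq_sum_le_card_mul_sum_sq
      _ ≤ (n:ℝ) * (σ ^ 2 / 100) := by
          apply mul_le_mul hcard hlow (Finset.sum_nonneg fun i _ => sq_nonneg _) hn0
  have hS2sq : S2 ^ 2 ≤ (n:ℝ) * σ ^ 2 / 100 := by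
    have : S2 = -S1 := by linarith
    rw [this]; rw [neg_pow]; simp; linarith
  have hS2le : S2 ≤ Real.sqrt n * σ / 10 := by
    have heq : (Real.sqrt n * σ / 10) ^ 2 = (n:ℝ) * σ ^ 2 / 100 := by
      rw [div_pow, mul_pow, hs]; norm_num
    nlinarith [mul_pos hspos hσ, hS2nn]
  -- sum over Ici M is ≤ S2
  have hIci : ∑ i ∈ Finset.Ici M, w i ≤ S2 := by
    rw [← Finset.sum_inter_add_sum_sdiff (Finset.Ici M) (Finset.Ioi j) w]
    have h1 : ∑ i ∈ Finset.Ici M ∩ Finset.Ioi j, w i ≤ S2 := by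
      apply Finset.sum_le_sum_of_subset_of_nonneg Finset.inter_subset_right
      intro i hi _; exact hnonneg i (Finset.mem_Ioi.mp hi)
    have h2 : ∑ i ∈ Finset.Ici M \ Finset.Ioi j, w i ≤ 0 := by
      apply Finset.sum_nonpos
      intro i hi
      have : ¬ j < i := (Finset.mem_sdiff.mp hi).2 ∘ Finset.mem_Ioi.mpr
      exact le_of_lt (lt_of_le_of_lt (hmono (not_lt.mp this)) hj)
    linarith
  -- lower bound on that sum
  have hcardIci : (Finset.Ici M).card = n - ((n+1)/2 - 1) := Fin.card_Ici M
  have hlb : ((Finset.Ici M).card : ℝ) * w M ≤ ∑ i ∈ Finset.Ici M, w i := by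
    have := Finset.card_nsmul_le_sum (Finset.Ici M) w (w M)
      (fun i hi => hmono (Finset.mem_Ici.mp hi))
    simpa [nsmul_eq_mul] using this
  have hhalf : (n:ℝ) / 2 ≤ ((Finset.Ici M).card : ℝ) := by
    rw [hcardIci]
    have h2 : n ≤ 2 * (n - ((n+1)/2 - 1)) := by omega
    have : (n:ℝ) ≤ 2 * ((n - ((n+1)/2 - 1) : ℕ) : ℝ) := by exact_mod_cast h2
    linarith
  rw [le_div_iff₀ (by positivity), mul_comm]
  rcases le_or_gt (w M) 0 with hwM | hwM
  · have : 5 * Real.sqrt n * w M ≤ 0 := by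
      apply mul_nonpos_of_nonneg_of_nonpos (by positivity) hwM
    linarith
  · have key : (n:ℝ) * w M ≤ Real.sqrt n * σ / 5 := by
      have h1 := mul_le_mul_of_nonneg_right hhalf hwM.le
      have h2 := hlb.trans (hIci.trans hS2le)
      linarith
    refine le_of_mul_le_mul_left ?_ hspos
    have expand : Real.sqrt n * (5 * Real.sqrt n * w M) = 5 * ((n:ℝ) * w M) := by
      have h := Real.mul_self_sqrt hn0
      calc Real.sqrt (n:ℝ) * (5 * Real.sqrt (n:ℝ) * w M)
          = (Real.sqrt (n:ℝ) * Real.sqrt (n:ℝ)) * (5 * w M) := by ring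
        _ = 5 * ((n:ℝ) * w M) := by rw [h]; ring
    rw [expand]
    linarith
end
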